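/- Lemma 6.4: Suppose assumptions A1, A2, A3 hold and let (y_n, λ_n, s_n) be the recursive construction of Theorem 6.1, with M = max{M2, M3} the constant from Lemma 6.3. If |δ| < 1/(12M²), then the three power series Σ_{n≥0} ‖y_n‖_{H²}|δ|^n, Σ_{n≥1} |λ_n||δ|^n, and Σ_{n≥1} |s_n||δ|^n converge; in particular the series y = Σ y_n δ^n, λ = λ0 + Σ_{n≥1} λ_n δ^n, and s = s0 + Σ_{n≥1} s_n δ^n in (6.16) converge. -/
import Mathlib


open MeasureTheory Set Filter

noncomputable section

/-- `Sol1D d lam g y y'` : C¹ solution on `[0,∞)` of `-y'' + d y - lam y = g`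
(away from finitely many points) with `y'(0) = 0`. -/
def Sol1D (d : ℝ → ℝ) (lam : ℝ) (g : ℝ → ℝ) (y y' : ℝ → ℝ) : Prop :=
  (∀ x ∈ Set.Ici (0 : ℝ), HasDerivWithinAt y (y' x) (Set.Ici 0) x) ∧
  ContinuousOn y' (Set.Ici 0) ∧
  (∃ E : Finset ℝ, ∀ x ∈ Set.Ioi (0 : ℝ), x ∉ (E : Set ℝ) →
    HasDerivAt y' (d x * y x - lam * y x - g x) x) ∧
  y' 0 = 0

/-- A bound state of `-d²/dx² + d(x)` on `(0,∞)` with Neumann condition at `0`. -/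
def IsBoundState1D (d : ℝ → ℝ) (lam : ℝ) (y y' : ℝ → ℝ) : Prop :=
  Sol1D d lam (fun _ => 0) y y' ∧
  Filter.Tendsto y Filter.atTop (nhds 0) ∧
  ∃ x ∈ Set.Ici (0 : ℝ), y x ≠ 0

/-- Solution of the uncoupled inhomogeneous system
`-y'' + diag(D) y - lam y = g` with `y'(0) = 0` and decay at `+∞`. -/
def DiagBVPSol (D : ℝ → Fin 3 → ℝ) (lam : ℝ) (g : ℝ → Fin 3 → ℝ)
    (y y' : ℝ → Fin 3 → ℝ) : Prop :=
  (∀ x ∈ Set.Ici (0 : ℝ), HasDerivWithinAt y (y' x) (Set.Ici 0) x) ∧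
  ContinuousOn y' (Set.Ici 0) ∧
  (∃ E : Finset ℝ, ∀ x ∈ Set.Ioi (0 : ℝ), x ∉ (E : Set ℝ) →
    HasDerivAt y' (fun i => D x i * y x i - lam * y x i - g x i) x) ∧
  y' 0 = 0 ∧
  Filter.Tendsto y Filter.atTop (nhds 0)

/-- The right hand side `g_n = Σ_{k=1}^n (λ_k - s_k D1) y_{n-k} - F y_{n-1}`. -/
def Gseq (D1 : ℝ → Fin 3 → ℝ) (F : ℝ → Fin 3 → Fin 3 → ℝ)
    (lamseq sseq : ℕ → ℝ) (Y : ℕ → ℝ → Fin 3 → ℝ) (n : ℕ) : ℝ → Fin 3 → ℝ :=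
  fun x i =>
    (∑ k ∈ Finset.Icc 1 n, (lamseq k - sseq k * D1 x i) * Y (n - k) x i) -
    ∑ j, F x i j * Y (n - 1) x j

/-- `h_n = F y_{n-1} + Σ_{k=1}^{n-1} (s_k D1 - λ_k) y_{n-k}`. -/
def Hseq (D1 : ℝ → Fin 3 → ℝ) (F : ℝ → Fin 3 → Fin 3 → ℝ)
    (lamseq sseq : ℕ → ℝ) (Y : ℕ → ℝ → Fin 3 → ℝ) (n : ℕ) : ℝ → Fin 3 → ℝ :=
  fun x i =>
    (∑ j, F x i j * Y (n - 1) x j) +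
    ∑ k ∈ Finset.Icc 1 (n - 1), (sseq k * D1 x i - lamseq k) * Y (n - k) x i

/-- The L² norm of a real vector function on `(0,∞)`. -/
def vecL2 (f : ℝ → Fin 3 → ℝ) : ℝ :=
  Real.sqrt (∫ x in Set.Ioi (0 : ℝ), ∑ i, (f x i) ^ 2)

/-- The H² norm of a real vector function on `(0,∞)`. -/
def vecH2 (f f' : ℝ → Fin 3 → ℝ) : ℝ :=
  Real.sqrt ((∫ x in Set.Ioi (0 : ℝ), ∑ i, (f x i) ^ 2) +
    (∫ x in Set.Ioi (0 : ℝ), ∑ i, (f' x i) ^ 2) +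
    (∫ x in Set.Ioi (0 : ℝ), ∑ i, (deriv (fun t => f' t i) x) ^ 2))



lemma sumInvSq (m : ℕ) : ∑ j ∈ Finset.Icc 1 m, (1:ℝ)/(j:ℝ)^2 ≤ 7/4 := by
  have key : ∀ m : ℕ, 2 ≤ m → ∑ j ∈ Finset.Icc 1 m, (1:ℝ)/(j:ℝ)^2 ≤ 7/4 - 1/(m:ℝ) := by
    intro m hm
    induction m, hm using Nat.le_induction with
    | base =>
      rw [Finset.sum_Icc_succ_top (by norm_num : (1:ℕ) ≤ 2)]
      norm_num [Finset.Icc_self]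
    | succ n hn ih =>
      rw [Finset.sum_Icc_succ_top (by omega : (1:ℕ) ≤ n+1)]
      have hn1 : (2:ℝ) ≤ (n:ℝ) := by exact_mod_cast hn
      have key2 : (1:ℝ)/((n:ℝ)+1)^2 ≤ 1/(n:ℝ) - 1/((n:ℝ)+1) := by
        rw [div_sub_div _ _ (by positivity) (by positivity)]
        rw [div_le_div_iff₀ (by positivity) (by positivity)]
        nlinarith
      push_cast
      nlinarith [ih]
  rcases Nat.lt_or_ge m 2 with h | h
  · interval_cases m
    · norm_num
    · norm_num [Finset.Icc_self]
  · have h1 := key m h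
    have h2 : (0:ℝ) < (m:ℝ) := by exact_mod_cast Nat.lt_of_lt_of_le Nat.zero_lt_two h
    nlinarith [one_div_pos.mpr h2]



lemma reflectSum (m : ℕ) (hm : 2 ≤ m) (f : ℕ → ℝ) :
    ∑ i ∈ Finset.Icc 1 (m-1), f (m - i) = ∑ i ∈ Finset.Icc 1 (m-1), f i := by
  apply Finset.sum_nbij' (fun i => m - i) (fun i => m - i)
  · intro a ha; simp only [Finset.mem_Icc] at *; omega
  · intro a ha; simp only [Finset.mem_Icc] at *; omega
  · intro a ha; simp only [Finset.mem_Icc] at ha; omega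
  · intro a ha; simp only [Finset.mem_Icc] at ha; omega
  · intro a ha; rfl

lemma convBound (m : ℕ) (hm : 2 ≤ m) :
    ∑ i ∈ Finset.Icc 1 (m-1), (1:ℝ)/((i:ℝ)^2 * ((m - i : ℕ):ℝ)^2) ≤ 7/(m:ℝ)^2 := by
  have hm0 : (0:ℝ) < (m:ℝ) := by exact_mod_cast Nat.lt_of_lt_of_le Nat.zero_lt_two hm
  have step : ∀ i ∈ Finset.Icc 1 (m-1),
      (1:ℝ)/((i:ℝ)^2 * ((m - i : ℕ):ℝ)^2) ≤
        2/(m:ℝ)^2 * ((1:ℝ)/(i:ℝ)^2 + (1:ℝ)/((m - i : ℕ):ℝ)^2) := by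
    intro i hi
    simp only [Finset.mem_Icc] at hi
    have ha : (1:ℝ) ≤ (i:ℝ) := by exact_mod_cast hi.1
    have hb : (1:ℝ) ≤ ((m - i : ℕ):ℝ) := by
      have : 1 ≤ m - i := by omega
      exact_mod_cast this
    have hab : (i:ℝ) + ((m - i : ℕ):ℝ) = (m:ℝ) := by
      have h1 : i ≤ m := by omega
      have := Nat.cast_sub (R := ℝ) h1
      rw [this]; ring
    set a := (i:ℝ)
    set b := ((m - i : ℕ):ℝ)
    have ha0 : (0:ℝ) < a := by linarith
    have hb0 : (0:ℝ) < b := by linarith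
    rw [← hab]
    have hrhs : 2/(a+b)^2 * (1/a^2 + 1/b^2) = 2*(a^2+b^2)/((a+b)^2*(a^2*b^2)) := by
      field_simp; ring
    rw [hrhs, div_le_div_iff₀ (by positivity) (by positivity)]
    nlinarith [sq_nonneg (a-b), sq_nonneg (a+b), sq_nonneg (a*b), mul_pos ha0 hb0]
  calc ∑ i ∈ Finset.Icc 1 (m-1), (1:ℝ)/((i:ℝ)^2 * ((m - i : ℕ):ℝ)^2)
      ≤ ∑ i ∈ Finset.Icc 1 (m-1),
          2/(m:ℝ)^2 * ((1:ℝ)/(i:ℝ)^2 + (1:ℝ)/((m - i : ℕ):ℝ)^2) :=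
        Finset.sum_le_sum step
    _ = 2/(m:ℝ)^2 * ((∑ i ∈ Finset.Icc 1 (m-1), (1:ℝ)/(i:ℝ)^2)
          + ∑ i ∈ Finset.Icc 1 (m-1), (1:ℝ)/((m - i : ℕ):ℝ)^2) := by
        rw [← Finset.mul_sum, Finset.sum_add_distrib]
    _ = 2/(m:ℝ)^2 * ((∑ i ∈ Finset.Icc 1 (m-1), (1:ℝ)/(i:ℝ)^2)
          + ∑ i ∈ Finset.Icc 1 (m-1), (1:ℝ)/(i:ℝ)^2) := by
        rw [reflectSum m hm (fun j => (1:ℝ)/(j:ℝ)^2)]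
    _ ≤ 2/(m:ℝ)^2 * (7/4 + 7/4) := by
        have := sumInvSq (m-1)
        gcongr
    _ = 7/(m:ℝ)^2 := by field_simp; ring

lemma Pb (P : ℕ → ℕ) (hP0 : P 0 = 1) (hP1 : P 1 = 1)
    (hPrec : ∀ k, 2 ≤ k →
      P k = P (k - 1) + ∑ i ∈ Finset.Icc 1 (k - 1), P i * (P (k - i) + P (k - i - 1))) :
    ∀ k, 1 ≤ k → (P k : ℝ) ≤ 12^(k-1) / (k:ℝ)^2 := by
  have hP2 : P 2 = 3 := by
    have h := hPrec 2 le_rfl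
    norm_num [Finset.Icc_self, hP0, hP1] at h
    omega
  have hP3 : P 3 = 13 := by
    have h := hPrec 3 (by omega)
    rw [show (3:ℕ) - 1 = 2 from rfl,
        Finset.sum_Icc_succ_top (by norm_num : (1:ℕ) ≤ 2)] at h
    norm_num [Finset.Icc_self, hP0, hP1, hP2] at h
    omega
  intro k
  induction k using Nat.strong_induction_on with
  | _ k IH =>
    intro hk
    match k, hk with
    | 1, _ => norm_num [hP1]
    | 2, _ => rw [hP2]; norm_num
    | 3, _ => rw [hP3]; norm_num
    | (n+4), _ =>
      have hrec := hPrec (n+4) (by omega)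
      rw [show n+4-1 = n+3 from rfl] at hrec
      -- cast to ℝ
      have hrecR : (P (n+4) : ℝ) = (P (n+3) : ℝ) +
          ∑ i ∈ Finset.Icc 1 (n+3), (P i : ℝ) * ((P (n+4-i) : ℝ) + (P (n+4-i-1) : ℝ)) := by
        exact_mod_cast congrArg (Nat.cast : ℕ → ℝ) hrec
      have hIH : ∀ m, 1 ≤ m → m ≤ n+3 → (P m : ℝ) ≤ 12^(m-1)/(m:ℝ)^2 :=
        fun m h1 h2 => IH m (by omega) h1
      -- split sum
      have hsplit : ∑ i ∈ Finset.Icc 1 (n+3), (P i : ℝ) * ((P (n+4-i) : ℝ) + (P (n+4-i-1) : ℝ))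
          = (∑ i ∈ Finset.Icc 1 (n+3), (P i : ℝ) * (P (n+4-i) : ℝ))
            + ∑ i ∈ Finset.Icc 1 (n+3), (P i : ℝ) * (P (n+3-i) : ℝ) := by
        rw [← Finset.sum_add_distrib]
        apply Finset.sum_congr rfl
        intro i hi
        rw [show n+4-i-1 = n+3-i by omega]
        ring
      -- bound S1
      have hS1 : (∑ i ∈ Finset.Icc 1 (n+3), (P i : ℝ) * (P (n+4-i) : ℝ))
          ≤ 12^(n+2) * (7/((n+4:ℕ):ℝ)^2) := by
        have hterm : ∀ i ∈ Finset.Icc 1 (n+3), (P i : ℝ) * (P (n+4-i) : ℝ) ≤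
            12^(n+2) * ((1:ℝ)/((i:ℝ)^2 * ((n+4-i:ℕ):ℝ)^2)) := by
          intro i hi
          simp only [Finset.mem_Icc] at hi
          have h1 := hIH i hi.1 (by omega)
          have h2 := hIH (n+4-i) (by omega) (by omega)
          have hi0 : (0:ℝ) < (i:ℝ) := by exact_mod_cast hi.1
          have hmi0 : (0:ℝ) < ((n+4-i:ℕ):ℝ) := by
            have : 1 ≤ n+4-i := by omega
            exact_mod_cast this
          calc (P i : ℝ) * (P (n+4-i) : ℝ)
              ≤ (12^(i-1)/(i:ℝ)^2) * (12^(n+4-i-1)/((n+4-i:ℕ):ℝ)^2) := by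
                apply mul_le_mul h1 h2 (Nat.cast_nonneg _) (by positivity)
            _ = 12^(n+2) * ((1:ℝ)/((i:ℝ)^2 * ((n+4-i:ℕ):ℝ)^2)) := by
                rw [div_mul_div_comm, ← pow_add, show (i-1)+(n+4-i-1) = n+2 by omega]
                ring
        calc (∑ i ∈ Finset.Icc 1 (n+3), (P i : ℝ) * (P (n+4-i) : ℝ))
            ≤ ∑ i ∈ Finset.Icc 1 (n+3), 12^(n+2) * ((1:ℝ)/((i:ℝ)^2 * ((n+4-i:ℕ):ℝ)^2)) :=
              Finset.sum_le_sum hterm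
          _ = 12^(n+2) * ∑ i ∈ Finset.Icc 1 ((n+4)-1), (1:ℝ)/((i:ℝ)^2 * (((n+4)-i:ℕ):ℝ)^2) := by
              rw [← Finset.mul_sum]
              norm_num
          _ ≤ 12^(n+2) * (7/((n+4:ℕ):ℝ)^2) := by
              have := convBound (n+4) (by omega)
              gcongr
      -- bound S2
      have hS2 : (∑ i ∈ Finset.Icc 1 (n+3), (P i : ℝ) * (P (n+3-i) : ℝ))
          ≤ 12^(n+1) * (7/((n+3:ℕ):ℝ)^2) + 12^(n+2)/((n+3:ℕ):ℝ)^2 := by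
        rw [Finset.sum_Icc_succ_top (by omega : (1:ℕ) ≤ n+3)]
        have htop : (P (n+3) : ℝ) * (P (n+3-(n+3)) : ℝ) ≤ 12^(n+2)/((n+3:ℕ):ℝ)^2 := by
          rw [show n+3-(n+3) = 0 by omega, hP0]
          have := hIH (n+3) (by omega) le_rfl
          push_cast
          simpa using this
        have hmain : (∑ i ∈ Finset.Icc 1 (n+2), (P i : ℝ) * (P (n+3-i) : ℝ))
            ≤ 12^(n+1) * (7/((n+3:ℕ):ℝ)^2) := by
          have hterm : ∀ i ∈ Finset.Icc 1 (n+2), (P i : ℝ) * (P (n+3-i) : ℝ) ≤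
              12^(n+1) * ((1:ℝ)/((i:ℝ)^2 * ((n+3-i:ℕ):ℝ)^2)) := by
            intro i hi
            simp only [Finset.mem_Icc] at hi
            have h1 := hIH i hi.1 (by omega)
            have h2 := hIH (n+3-i) (by omega) (by omega)
            have hi0 : (0:ℝ) < (i:ℝ) := by exact_mod_cast hi.1
            have hmi0 : (0:ℝ) < ((n+3-i:ℕ):ℝ) := by
              have : 1 ≤ n+3-i := by omega
              exact_mod_cast this
            calc (P i : ℝ) * (P (n+3-i) : ℝ)
                ≤ (12^(i-1)/(i:ℝ)^2) * (12^(n+3-i-1)/((n+3-i:ℕ):ℝ)^2) := by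
                  apply mul_le_mul h1 h2 (Nat.cast_nonneg _) (by positivity)
              _ = 12^(n+1) * ((1:ℝ)/((i:ℝ)^2 * ((n+3-i:ℕ):ℝ)^2)) := by
                  rw [div_mul_div_comm, ← pow_add, show (i-1)+(n+3-i-1) = n+1 by omega]
                  ring
          calc (∑ i ∈ Finset.Icc 1 (n+2), (P i : ℝ) * (P (n+3-i) : ℝ))
              ≤ ∑ i ∈ Finset.Icc 1 (n+2), 12^(n+1) * ((1:ℝ)/((i:ℝ)^2 * ((n+3-i:ℕ):ℝ)^2)) :=
                Finset.sum_le_sum hterm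
            _ = 12^(n+1) * ∑ i ∈ Finset.Icc 1 ((n+3)-1), (1:ℝ)/((i:ℝ)^2 * (((n+3)-i:ℕ):ℝ)^2) := by
                rw [← Finset.mul_sum]
                norm_num
            _ ≤ 12^(n+1) * (7/((n+3:ℕ):ℝ)^2) := by
                have := convBound (n+3) (by omega)
                gcongr
        linarith
      -- combine
      have hPn3 : (P (n+3) : ℝ) ≤ 12^(n+2)/((n+3:ℕ):ℝ)^2 := by
        have := hIH (n+3) (by omega) le_rfl
        push_cast
        simpa using this
      rw [hrecR, hsplit]
      push_cast at hS1 hS2 hPn3 ⊢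
      have hx : (0:ℝ) < 12^(n+1) := by positivity
      have ha : (0:ℝ) < (n:ℝ)+3 := by positivity
      have hb : (0:ℝ) < (n:ℝ)+4 := by positivity
      have h31 : (31:ℝ)/((n:ℝ)+3)^2 ≤ 60/((n:ℝ)+4)^2 := by
        rw [div_le_div_iff₀ (by positivity) (by positivity)]
        nlinarith [(n.cast_nonneg : (0:ℝ) ≤ (n:ℝ))]
      have hmul := mul_le_mul_of_nonneg_left h31 (le_of_lt hx)
      have e1 : (12:ℝ)^(n+2) = 12 * 12^(n+1) := by ring
      have hgoal : (12:ℝ)^(n+3) / ((n:ℝ)+4)^2 = 144 * 12^(n+1) * (1/((n:ℝ)+4)^2) := by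
        ring
      rw [hgoal]
      have lhsle : ((P (n+3):ℝ)) + ((∑ i ∈ Finset.Icc 1 (n + 3), (P i:ℝ) * (P (n + 4 - i):ℝ))
          + ∑ i ∈ Finset.Icc 1 (n + 3), (P i:ℝ) * (P (n + 3 - i):ℝ))
          ≤ 12^(n+1) * (31/((n:ℝ)+3)^2) + 84 * 12^(n+1) * (1/((n:ℝ)+4)^2) := by
        have : (12:ℝ)^(n+2)/((n:ℝ)+3)^2 + 12^(n+2)*(7/((n:ℝ)+4)^2)
            + (12^(n+1)*(7/((n:ℝ)+3)^2) + 12^(n+2)/((n:ℝ)+3)^2)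
            = 12^(n+1) * (31/((n:ℝ)+3)^2) + 84 * 12^(n+1) * (1/((n:ℝ)+4)^2) := by
          rw [e1]; ring
        linarith
      have heq2 : (12:ℝ)^(n+1) * (60/((n:ℝ)+4)^2) + 84 * 12^(n+1) * (1/((n:ℝ)+4)^2)
          = 144 * 12^(n+1) * (1/((n:ℝ)+4)^2) := by ring
      linarith [lhsle, hmul]


/-- Lemma 6.4: under assumptions A1, A2, A3, for the recursive construction
`(y_n, λ_n, s_n)` of Theorem 6.1, with `M = max{M2, M3}` the constant from
Lemma 6.3 (so that `‖h_n‖ ≤ M^{2n-2} P_{n-1}` for `n ≥ 2` and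
`‖y_n‖_{H²} ≤ M^{2n-1} P_{n-1}` for `n ≥ 1`, and
`max{|λ_n|, |s_n|} ≤ 2 ‖A⁻¹‖_max ‖h_n‖`): if `|δ| < 1/(12 M²)` then the three
power series `Σ ‖y_n‖_{H²} |δ|ⁿ`, `Σ |λ_n| |δ|ⁿ` and `Σ |s_n| |δ|ⁿ`
converge. -/
theorem lemma_6_4_convergence
    (L s0 lam0 θ0 : ℝ) (hL : 0 < L) (hlam0 : lam0 ∈ Set.Ioo (0 : ℝ) 1)
    (D0 D1 : ℝ → Fin 3 → ℝ) (F : ℝ → Fin 3 → Fin 3 → ℝ)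
    (ED : Finset ℝ)
    (hD0sm : ∀ x ∉ (ED : Set ℝ), ContDiffAt ℝ (⊤ : ℕ∞) D0 x)
    (hD1sm : ∀ x ∉ (ED : Set ℝ), ContDiffAt ℝ (⊤ : ℕ∞) D1 x)
    (hFsm : ∀ x ∉ (ED : Set ℝ), ContDiffAt ℝ (⊤ : ℕ∞) F x)
    (CB : ℝ)
    (hbdd : ∀ x, (∀ i, |D0 x i| ≤ CB ∧ |D1 x i| ≤ CB) ∧ ∀ i j, |F x i j| ≤ CB)
    (hD0L : ∀ x ≥ L, D0 x = ![0, 1, 1])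
    (hD1L : ∀ x ≥ L, D1 x = 0)
    (hFL : ∀ x ≥ L, F x = 0)
    (hFsymm : ∀ x i j, F x i j = F x j i)
    (hFdiag : ∀ x i, F x i i = 0)
    -- assumption A2
    (φ1 φ1' φ2 φ2' : ℝ → ℝ)
    (hφ1 : IsBoundState1D (fun x => D0 x 1) lam0 φ1 φ1')
    (hφ2 : IsBoundState1D (fun x => D0 x 2) lam0 φ2 φ2')
    (hφ1norm : ∫ x in Set.Ioi (0 : ℝ), (φ1 x) ^ 2 = 1)
    (hφ2norm : ∫ x in Set.Ioi (0 : ℝ), (φ2 x) ^ 2 = 1)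
    (d11 d22 : ℝ)
    (hd11 : d11 = ∫ x in Set.Ioi (0 : ℝ), D1 x 1 * (φ1 x) ^ 2)
    (hd22 : d22 = ∫ x in Set.Ioi (0 : ℝ), D1 x 2 * (φ2 x) ^ 2)
    (hA2 : d11 ≠ d22)
    -- assumption A3
    (φ0 φ0' : ℝ → ℝ)
    (hφ0 : Sol1D (fun x => D0 x 0) lam0 (fun _ => 0) φ0 φ0')
    (hφ0L : ∀ x > L, φ0 x = Real.cos (Real.sqrt lam0 * x + θ0 / 2))
    (C1 C2 : ℝ)
    (hC1 : C1 = ∫ x in Set.Ioi (0 : ℝ), φ0 x * (F x 0 2 * φ2 x))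
    (hC2 : C2 = -(∫ x in Set.Ioi (0 : ℝ), φ0 x * (F x 0 1 * φ1 x)))
    (hA3a : C2 ≠ 0) (hA3b : C1 ≠ 0)
    (hA3n : C1 ^ 2 + C2 ^ 2 = 1)
    -- the recursive construction of Theorem 6.1
    (lamseq sseq gamseq : ℕ → ℝ)
    (Y Y' Yp Yp' : ℕ → ℝ → Fin 3 → ℝ)
    (hY0 : ∀ x, Y 0 x = ![0, C1 * φ1 x, C2 * φ2 x])
    (hY0norm : vecL2 (Y 0) = 1)
    (hYsol : ∀ n, 1 ≤ n →
      DiagBVPSol D0 lam0 (Gseq D1 F lamseq sseq Y n) (Y n) (Y' n))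
    (hYpsol : ∀ n, 1 ≤ n →
      DiagBVPSol D0 lam0 (Gseq D1 F lamseq sseq Y n) (Yp n) (Yp' n))
    (hYporth : ∀ n, 1 ≤ n →
      (∫ x in Set.Ioi (0 : ℝ), φ1 x * Yp n x 1) = 0 ∧
      (∫ x in Set.Ioi (0 : ℝ), φ2 x * Yp n x 2) = 0)
    (hdecomp : ∀ n, 1 ≤ n → ∀ x, Y n x = fun i =>
      Yp n x i + gamseq n * (![0, C2 * φ1 x, -(C1 * φ2 x)] : Fin 3 → ℝ) i)
    (hlin : ∀ n, 1 ≤ n →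
      C1 * lamseq n - C1 * d11 * sseq n =
        (∫ x in Set.Ioi (0 : ℝ), φ1 x * Hseq D1 F lamseq sseq Y n x 1) ∧
      C2 * lamseq n - C2 * d22 * sseq n =
        (∫ x in Set.Ioi (0 : ℝ), φ2 x * Hseq D1 F lamseq sseq Y n x 2))
    (hgam : ∀ n, 1 ≤ n →
      gamseq n = ∫ x in Set.Ioi (0 : ℝ),
        φ0 x * Hseq D1 F lamseq sseq Yp (n + 1) x 0)
    -- the integer sequence (P_k)
    (P : ℕ → ℕ)
    (hP0 : P 0 = 1) (hP1 : P 1 = 1)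
    (hPrec : ∀ k, 2 ≤ k →
      P k = P (k - 1) + ∑ i ∈ Finset.Icc 1 (k - 1), P i * (P (k - i) + P (k - i - 1)))
    -- the bounds of Lemma 6.3, with M = max{M2, M3}
    (M : ℝ)
    (hHbound : ∀ n, 2 ≤ n →
      vecL2 (Hseq D1 F lamseq sseq Y n) ≤ M ^ (2 * n - 2) * (P (n - 1) : ℝ))
    (hYbound : ∀ n, 1 ≤ n →
      vecH2 (Y n) (Y' n) ≤ M ^ (2 * n - 1) * (P (n - 1) : ℝ))
    -- the bound (6.31): max{|λ_n|, |s_n|} ≤ 2 ‖A⁻¹‖_max ‖h_n‖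
    (K : ℝ) (hK : 0 ≤ K)
    (hlsbound : ∀ n, 1 ≤ n →
      |lamseq n| ≤ K * vecL2 (Hseq D1 F lamseq sseq Y n) ∧
      |sseq n| ≤ K * vecL2 (Hseq D1 F lamseq sseq Y n))
    -- the smallness condition on δ
    (δ : ℝ) (hδ : |δ| < 1 / (12 * M ^ 2)) :
    Summable (fun n : ℕ => vecH2 (Y n) (Y' n) * |δ| ^ n) ∧
    Summable (fun n : ℕ => |lamseq n| * |δ| ^ n) ∧
    Summable (fun n : ℕ => |sseq n| * |δ| ^ n) := by
  have PB := Pb P hP0 hP1 hPrec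
  have PS : ∀ k, (P k : ℝ) ≤ 12 ^ k := by
    intro k
    rcases Nat.eq_zero_or_pos k with h | h
    · subst h; rw [hP0]; norm_num
    · have h1 := PB k h
      have h2 : (12:ℝ)^(k-1)/(k:ℝ)^2 ≤ 12^(k-1) := by
        apply div_le_self (by positivity)
        have : (1:ℝ) ≤ (k:ℝ) := by exact_mod_cast h
        nlinarith
      have h3 : (12:ℝ)^(k-1) ≤ 12^k :=
        pow_le_pow_right₀ (by norm_num) (by omega)
      linarith
  have hH2nn : ∀ n, 0 ≤ vecH2 (Y n) (Y' n) := fun n => Real.sqrt_nonneg _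
  have hM : 0 < M := by
    rcases lt_trichotomy M 0 with h | h | h
    · exfalso
      have h1 := hYbound 1 le_rfl
      rw [show 2*1-1 = 1 from rfl, show (1:ℕ)-1 = 0 from rfl, hP0, pow_one] at h1
      have := hH2nn 1
      push_cast at h1
      linarith
    · exfalso; rw [h] at hδ; norm_num at hδ; linarith [abs_nonneg δ]
    · exact h
  set q : ℝ := 12 * M ^ 2 * |δ| with hqdef
  have hq0 : 0 ≤ q := by positivity
  have hq1 : q < 1 := by
    have h12 : (0:ℝ) < 12 * M ^ 2 := by positivity
    have := (lt_div_iff₀ h12).mp hδ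
    calc q = |δ| * (12 * M^2) := by ring
      _ < 1 := this
  have hgeo : Summable (fun n : ℕ => q ^ n) := summable_geometric_of_lt_one hq0 hq1
  have hδnn : (0:ℝ) ≤ |δ| := abs_nonneg δ
  refine ⟨?_, ?_, ?_⟩
  · -- vecH2 series
    have S1 : Summable (fun n : ℕ => vecH2 (Y (n+1)) (Y' (n+1)) * |δ| ^ (n+1)) := by
      apply Summable.of_nonneg_of_le (f := fun n => (M * |δ|) * q ^ n)
        (fun n => mul_nonneg (hH2nn _) (by positivity)) (fun n => ?_) (hgeo.mul_left _)
      have h1 := hYbound (n+1) (by omega)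
      rw [show 2*(n+1)-1 = 2*n+1 by omega, show n+1-1 = n from rfl] at h1
      have h2 : (M:ℝ)^(2*n+1) * (P n : ℝ) ≤ M^(2*n+1) * 12^n :=
        mul_le_mul_of_nonneg_left (PS n) (by positivity)
      calc vecH2 (Y (n+1)) (Y' (n+1)) * |δ| ^ (n+1)
          ≤ (M^(2*n+1) * (P n : ℝ)) * |δ| ^ (n+1) := by
            exact mul_le_mul_of_nonneg_right h1 (by positivity)
        _ ≤ (M^(2*n+1) * 12^n) * |δ| ^ (n+1) := by
            exact mul_le_mul_of_nonneg_right h2 (by positivity)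
        _ = (M * |δ|) * q ^ n := by
            rw [hqdef, mul_pow, mul_pow, ← pow_mul]
            ring
    exact (summable_nat_add_iff 1).mp S1
  · -- lamseq series
    have S2 : Summable (fun n : ℕ => |lamseq (n+2)| * |δ| ^ (n+2)) := by
      apply Summable.of_nonneg_of_le (f := fun n => (K * |δ|^2 * (12 * M^2)) * q ^ n)
        (fun n => by positivity) (fun n => ?_) (hgeo.mul_left _)
      have h1 := (hlsbound (n+2) (by omega)).1
      have h2 := hHbound (n+2) (by omega)
      rw [show 2*(n+2)-2 = 2*n+2 by omega, show n+2-1 = n+1 from rfl] at h2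
      have h3 : vecL2 (Hseq D1 F lamseq sseq Y (n+2)) ≤ M^(2*n+2) * 12^(n+1) := by
        calc vecL2 (Hseq D1 F lamseq sseq Y (n+2)) ≤ M^(2*n+2) * (P (n+1) : ℝ) := h2
          _ ≤ M^(2*n+2) * 12^(n+1) :=
            mul_le_mul_of_nonneg_left (PS (n+1)) (by positivity)
      calc |lamseq (n+2)| * |δ| ^ (n+2)
          ≤ (K * (M^(2*n+2) * 12^(n+1))) * |δ| ^ (n+2) := by
            apply mul_le_mul_of_nonneg_right _ (by positivity)
            calc |lamseq (n+2)| ≤ K * vecL2 (Hseq D1 F lamseq sseq Y (n+2)) := h1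
              _ ≤ K * (M^(2*n+2) * 12^(n+1)) := mul_le_mul_of_nonneg_left h3 hK
        _ = (K * |δ|^2 * (12 * M^2)) * q ^ n := by
            rw [hqdef, mul_pow, mul_pow, ← pow_mul]
            ring
    exact (summable_nat_add_iff 2).mp S2
  · -- sseq series
    have S3 : Summable (fun n : ℕ => |sseq (n+2)| * |δ| ^ (n+2)) := by
      apply Summable.of_nonneg_of_le (f := fun n => (K * |δ|^2 * (12 * M^2)) * q ^ n)
        (fun n => by positivity) (fun n => ?_) (hgeo.mul_left _)
      have h1 := (hlsbound (n+2) (by omega)).2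
      have h2 := hHbound (n+2) (by omega)
      rw [show 2*(n+2)-2 = 2*n+2 by omega, show n+2-1 = n+1 from rfl] at h2
      have h3 : vecL2 (Hseq D1 F lamseq sseq Y (n+2)) ≤ M^(2*n+2) * 12^(n+1) := by
        calc vecL2 (Hseq D1 F lamseq sseq Y (n+2)) ≤ M^(2*n+2) * (P (n+1) : ℝ) := h2
          _ ≤ M^(2*n+2) * 12^(n+1) :=
            mul_le_mul_of_nonneg_left (PS (n+1)) (by positivity)
      calc |sseq (n+2)| * |δ| ^ (n+2)
          ≤ (K * (M^(2*n+2) * 12^(n+1))) * |δ| ^ (n+2) := by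
            apply mul_le_mul_of_nonneg_right _ (by positivity)
            calc |sseq (n+2)| ≤ K * vecL2 (Hseq D1 F lamseq sseq Y (n+2)) := h1
              _ ≤ K * (M^(2*n+2) * 12^(n+1)) := mul_le_mul_of_nonneg_left h3 hK
        _ = (K * |δ|^2 * (12 * M^2)) * q ^ n := by
            rw [hqdef, mul_pow, mul_pow, ← pow_mul]
            ring
    exact (summable_nat_add_iff 2).mp S3

end
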